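/- For d ∈ {1,...,9}, the function f_d : [1/(d+1), 1/d] → ℝ defined by f_d(x) = d(α_d − 1)x + 1 + ((9d−1)/9)·x·(ln x + ln d), with α_d = (9 + 10·ln 10 + 9(d+1)·ln(1 − 1/(d+1)))/(81d), attains its minimum at x₀ = (1/d)·10^{−10/(9(9d−1))}·(1 − 1/(d+1))^{−(d+1)/(9d−1)}, and the minimum value equals 1 − ((9d−1)/(9d))·10^{−10/(9(9d−1))}·(1 − 1/(d+1))^{−(d+1)/(9d−1)}. -/

import Mathlib

noncomputable def alpha (d : ℕ) : ℝ :=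
  (9 + 10 * Real.log 10 + 9 * ((d : ℝ) + 1) * Real.log (1 - 1 / ((d : ℝ) + 1))) / (81 * d)

noncomputable def f (d : ℕ) (x : ℝ) : ℝ :=
  (d : ℝ) * (alpha d - 1) * x + 1 + ((9 * (d : ℝ) - 1) / 9) * x * (Real.log x + Real.log d)


/-!
Writing `k = (9d - 1)/9`, `α_d` is exactly the value for which `f_d'(x₀) = 0`, i.e.
`d (α_d - 1) = -k (1 + log (d x₀))`. Substituting this into `f_d` turns it into
`f_d(x) = 1 - k x₀ + k x₀ · klFun (x / x₀)` with `klFun t = t log t + 1 - t ≥ 0`, so `x₀` is the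
minimum of `f_d` on all of `(0, ∞)` and `f_d(x₀) = 1 - k x₀`. That `x₀` lies in
`[1/(d+1), 1/d]` reduces, after taking logarithms, to `2 < log 10 < 9/2` together with
`-1/d ≤ log (1 - 1/(d+1)) ≤ -1/(d+1)`.
-/

open Real Set InformationTheory

lemma two_lt_log_ten : 2 < log 10 := by
  have h8 : log 8 = 3 * log 2 := by
    rw [show (8 : ℝ) = 2 ^ 3 by norm_num, log_pow]; norm_num
  have : log 8 < log 10 := log_lt_log (by norm_num) (by norm_num)
  linarith [log_two_gt_d9]

lemma log_ten_lt_nine_halves : log 10 < 9 / 2 := by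
  have h16 : log 16 = 4 * log 2 := by
    rw [show (16 : ℝ) = 2 ^ 4 by norm_num, log_pow]; norm_num
  have : log 10 < log 16 := log_lt_log (by norm_num) (by norm_num)
  linarith [log_two_lt_d9]

lemma linear_add_mul_log_eq_klFun {c k p y x : ℝ} (hp : 0 < p) (hy : 0 < y) (hx : 0 < x)
    (hc : c = -k * (1 + log (p * y))) :
    c * x + k * x * log (p * x) = -k * y + k * y * klFun (x / y) := by
  rw [hc, klFun_apply, log_mul hp.ne' hy.ne', log_mul hp.ne' hx.ne', log_div hx.ne' hy.ne']
  field_simp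
  ring

noncomputable def fMinimizer (D : ℝ) : ℝ :=
  (1 / D) * (10 : ℝ) ^ (-(10 : ℝ) / (9 * (9 * D - 1))) *
    (1 - 1 / (D + 1)) ^ (-(D + 1) / (9 * D - 1))

section fMinimizer

variable {D : ℝ}

lemma one_sub_one_div_add_one_eq (hD : D + 1 ≠ 0) : 1 - 1 / (D + 1) = D / (D + 1) := by
  field_simp; ring

lemma one_sub_one_div_add_one_pos (hD : 0 < D) : 0 < 1 - 1 / (D + 1) := by
  rw [one_sub_one_div_add_one_eq (by positivity)]; positivity

lemma fMinimizer_pos (hD : 0 < D) : 0 < fMinimizer D :=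
  mul_pos (mul_pos (by positivity) (rpow_pos_of_pos (by norm_num) _))
    (rpow_pos_of_pos (one_sub_one_div_add_one_pos hD) _)

lemma log_mul_fMinimizer (hD : 0 < D) (hD' : 9 * D - 1 ≠ 0) :
    9 * (9 * D - 1) * log (D * fMinimizer D) =
      -10 * log 10 - 9 * (D + 1) * log (1 - 1 / (D + 1)) := by
  have hr := one_sub_one_div_add_one_pos hD
  rw [fMinimizer, show ∀ a b : ℝ, D * (1 / D * a * b) = a * b by intros; field_simp,
    log_mul (rpow_pos_of_pos (by norm_num) _).ne' (rpow_pos_of_pos hr _).ne',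
    log_rpow (by norm_num), log_rpow hr]
  field_simp
  ring

lemma fMinimizer_mem_Icc (hD : 1 ≤ D) : fMinimizer D ∈ Icc (1 / (D + 1)) (1 / D) := by
  have hD0 : 0 < D := by linarith
  have hr := one_sub_one_div_add_one_pos hD0
  have hDx₀ : 0 < D * fMinimizer D := mul_pos hD0 (fMinimizer_pos hD0)
  have hlog := log_mul_fMinimizer hD0 (by linarith)
  set ℓ := log (1 - 1 / (D + 1))
  have hℓ_upper : (D + 1) * ℓ ≤ -1 := by
    have := log_le_sub_one_of_pos hr
    have : 1 - 1 / (D + 1) - 1 = -1 / (D + 1) := by ring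
    rw [← le_div_iff₀' (by positivity)]; linarith
  have hℓ_lower : -1 ≤ D * ℓ := by
    have := one_sub_inv_le_log_of_pos hr
    have : 1 - (1 - 1 / (D + 1))⁻¹ = -1 / D := by
      rw [one_sub_one_div_add_one_eq (by positivity), inv_div]; field_simp; ring
    rw [← div_le_iff₀' hD0]; linarith
  have hL := two_lt_log_ten
  have hL' := log_ten_lt_nine_halves
  constructor
  · have : log (1 - 1 / (D + 1)) ≤ log (D * fMinimizer D) := by
      nlinarith [mul_nonpos_of_nonneg_of_nonpos (sub_nonneg.2 hD) (show ℓ ≤ 0 by nlinarith)]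
    have := (log_le_log_iff hr hDx₀).1 this
    rw [one_sub_one_div_add_one_eq (by positivity), div_eq_mul_one_div] at this
    exact le_of_mul_le_mul_left this hD0
  · have : log (D * fMinimizer D) ≤ 0 := by nlinarith
    have := (log_nonpos_iff hDx₀.le).1 this
    rw [le_div_iff₀ hD0]; linarith

end fMinimizer

section f

variable {d : ℕ}

lemma mul_alpha_sub_one_eq_log_fMinimizer (hd : d ≠ 0) :
    d * (alpha d - 1) = -((9 * d - 1) / 9) * (1 + log (d * fMinimizer d)) := by
  have hd1 : (1 : ℝ) ≤ d := by exact_mod_cast Nat.one_le_iff_ne_zero.2 hd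
  have hlog := log_mul_fMinimizer (D := d) (by linarith) (by linarith)
  rw [alpha]
  generalize log (1 - 1 / ((d : ℝ) + 1)) = ℓ at hlog ⊢
  generalize log (d * fMinimizer d) = y at hlog ⊢
  field_simp
  linear_combination 9 * hlog

lemma f_eq_klFun (hd : d ≠ 0) {x : ℝ} (hx : 0 < x) :
    f d x = 1 - (9 * d - 1) / 9 * fMinimizer d +
      (9 * d - 1) / 9 * fMinimizer d * klFun (x / fMinimizer d) := by
  have hd0 : (0 : ℝ) < d := by positivity
  have := linear_add_mul_log_eq_klFun hd0 (fMinimizer_pos hd0) hx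
    (mul_alpha_sub_one_eq_log_fMinimizer hd)
  rw [f, ← log_mul hx.ne' hd0.ne', mul_comm x]
  linarith

lemma f_fMinimizer (hd : d ≠ 0) : f d (fMinimizer d) = 1 - (9 * d - 1) / 9 * fMinimizer d := by
  rw [f_eq_klFun hd (fMinimizer_pos (by positivity)), div_self (fMinimizer_pos (by positivity)).ne',
    klFun_one, mul_zero, add_zero]

lemma f_fMinimizer_le (hd : d ≠ 0) {x : ℝ} (hx : 0 < x) : f d (fMinimizer d) ≤ f d x := by
  have hd1 : (1 : ℝ) ≤ d := by exact_mod_cast Nat.one_le_iff_ne_zero.2 hd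
  have hx₀ := fMinimizer_pos (D := d) (by positivity)
  rw [f_fMinimizer hd, f_eq_klFun hd hx, le_add_iff_nonneg_right]
  have := klFun_nonneg (div_pos hx hx₀).le
  have : 0 ≤ (9 * (d : ℝ) - 1) / 9 := by linarith
  positivity

end f

theorem f_min (d : ℕ) (hd : d ∈ Finset.Icc 1 9) :
    let x₀ : ℝ := (1 / (d : ℝ)) * (10 : ℝ) ^ (-(10 : ℝ) / (9 * (9 * (d : ℝ) - 1))) *
      (1 - 1 / ((d : ℝ) + 1)) ^ (-((d : ℝ) + 1) / (9 * (d : ℝ) - 1))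
    x₀ ∈ Set.Icc (1 / ((d : ℝ) + 1)) (1 / (d : ℝ)) ∧
    (∀ x ∈ Set.Icc (1 / ((d : ℝ) + 1)) (1 / (d : ℝ)), f d x₀ ≤ f d x) ∧
    f d x₀ = 1 - ((9 * (d : ℝ) - 1) / (9 * d)) * (10 : ℝ) ^ (-(10 : ℝ) / (9 * (9 * (d : ℝ) - 1))) *
      (1 - 1 / ((d : ℝ) + 1)) ^ (-((d : ℝ) + 1) / (9 * (d : ℝ) - 1)) := by
  intro x₀
  have hd1 : 1 ≤ d := (Finset.mem_Icc.mp hd).1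
  have hd0 : d ≠ 0 := Nat.one_le_iff_ne_zero.1 hd1
  refine ⟨fMinimizer_mem_Icc (by exact_mod_cast hd1),
    fun x hx => f_fMinimizer_le hd0 (lt_of_lt_of_le (by positivity) hx.1), ?_⟩
  rw [show x₀ = fMinimizer d from rfl, f_fMinimizer hd0, fMinimizer]
  ring
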